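/- arXiv:1607.08721 — 2 statements merged into one kernel-verified Lean document; each statement's English description precedes it below -/
import Mathlib

section
/- Let X be a compact topological space, let (K, d) be a compact metric space, and for each x ∈ X let μ_x be a finite Borel measure on K with no atoms, i.e. μ_x({p}) = 0 for every p ∈ K. Assume the family is continuous in total variation: for every x ∈ X and every ε > 0 there is an open neighborhood U of x in X such that |μ_y(A) − μ_x(A)| ≤ ε for every Borel set A ⊆ K and every y ∈ U. Then for every δ > 0 there exists r > 0 such that μ_x(B_r(p)) < δ for every x ∈ X and every p ∈ K, where B_r(p) = {q ∈ K : d(q, p) < r}. (This is the measure-theoretic content of the lemma that a family of cycles depending continuously on the parameter in the mass topology has no concentration of mass.) -/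
open MeasureTheory Metric Set Filter Topology

lemma single_measure_small_balls
    {K : Type*} [MetricSpace K] [CompactSpace K] [MeasurableSpace K] [BorelSpace K]
    (ν : MeasureTheory.Measure K) (hfin : ν Set.univ ≠ ⊤) (hat : ∀ p : K, ν {p} = 0)
    {δ : ENNReal} (hδ : 0 < δ) :
    ∃ r : ℝ, 0 < r ∧ ∀ p : K, ν (ball p r) < δ := by
  by_contra hcon
  push_neg at hcon
  have hseq : ∀ n : ℕ, ∃ p : K, δ ≤ ν (ball p (1 / (n + 1))) := fun n =>
    hcon _ (by positivity)
  choose p hp using hseq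
  obtain ⟨a, -, φ, hφ, hlim⟩ := isCompact_univ.tendsto_subseq (fun n => mem_univ (p n))
  have htend : Tendsto (fun r => ν (cthickening r ({a} : Set K))) (𝓝[>] 0) (𝓝 0) := by
    have := tendsto_measure_cthickening_of_isClosed (μ := ν) (s := ({a} : Set K))
      ⟨1, one_pos, ne_top_of_le_ne_top hfin (measure_mono (subset_univ _))⟩
      isClosed_singleton
    rw [hat a] at this
    exact this.mono_left nhdsWithin_le_nhds
  obtain ⟨r0, hνr0, hr0mem⟩ := ((htend.eventually_lt_const hδ).and self_mem_nhdsWithin).exists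
  have hr0 : 0 < r0 := hr0mem
  have h2 : ∀ᶠ n : ℕ in atTop, (1 : ℝ) / (n + 1) < r0 / 2 :=
    tendsto_one_div_add_atTop_nhds_zero_nat.eventually_lt_const (by linarith)
  have h3 : ∀ᶠ n : ℕ in atTop, dist (p (φ n)) a < r0 / 2 :=
    (Metric.tendsto_nhds.mp hlim) (r0 / 2) (by linarith)
  obtain ⟨n, hn2, hn3⟩ := (h2.and h3).exists
  have hmono : (1 : ℝ) / (φ n + 1) ≤ 1 / (n + 1) := by
    apply one_div_le_one_div_of_le (by positivity)
    exact_mod_cast Nat.succ_le_succ (hφ.le_apply)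
  have hsub : ball (p (φ n)) (1 / (φ n + 1)) ⊆ closedBall a r0 := by
    intro q hq
    simp only [mem_ball] at hq
    have : dist q a ≤ dist q (p (φ n)) + dist (p (φ n)) a := dist_triangle _ _ _
    simp only [mem_closedBall]
    linarith
  have hcontr : δ ≤ ν (cthickening r0 ({a} : Set K)) := by
    rw [Metric.cthickening_singleton a hr0.le]
    exact le_trans (hp (φ n)) (measure_mono hsub)
  exact absurd hνr0 (not_lt.mpr hcontr)

/-- Let `X` be a compact topological space, `K` a compact metric space, and
for each `x ∈ X` let `μ x` be a finite atomless Borel measure on `K`, the family being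
continuous in total variation. Then for every `δ > 0` there is `r > 0` such that
`μ x (B_r p) < δ` for every `x ∈ X` and `p ∈ K` (no concentration of mass). -/
theorem no_concentration_of_mass
    {X : Type*} [TopologicalSpace X] [CompactSpace X]
    {K : Type*} [MetricSpace K] [CompactSpace K] [MeasurableSpace K] [BorelSpace K]
    (μ : X → MeasureTheory.Measure K)
    (hfin : ∀ x, μ x Set.univ ≠ ⊤)
    (hatomless : ∀ (x : X) (p : K), μ x {p} = 0)
    (hcont : ∀ (x : X) (ε : ℝ), 0 < ε → ∃ U : Set X, IsOpen U ∧ x ∈ U ∧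
      ∀ y ∈ U, ∀ A : Set K, MeasurableSet A →
        |(μ y A).toReal - (μ x A).toReal| ≤ ε) :
    ∀ δ : ℝ, 0 < δ → ∃ r : ℝ, 0 < r ∧
      ∀ (x : X) (p : K), (μ x (Metric.ball p r)).toReal < δ := by
  intro δ hδ
  rcases isEmpty_or_nonempty X with hX | hX
  · exact ⟨1, one_pos, fun x => (IsEmpty.false x).elim⟩
  have hball : ∀ x : X, ∃ r : ℝ, 0 < r ∧ ∀ p, μ x (ball p r) < ENNReal.ofReal (δ / 2) :=
    fun x => single_measure_small_balls (μ x) (hfin x) (hatomless x)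
      (ENNReal.ofReal_pos.mpr (by linarith))
  choose r hr hrball using hball
  have hU : ∀ x : X, ∃ U : Set X, IsOpen U ∧ x ∈ U ∧ ∀ y ∈ U, ∀ A : Set K,
      MeasurableSet A → |(μ y A).toReal - (μ x A).toReal| ≤ δ / 4 :=
    fun x => hcont x (δ / 4) (by linarith)
  choose U hUopen hUmem hUest using hU
  obtain ⟨t, ht⟩ := isCompact_univ.elim_finite_subcover U hUopen
    (fun x _ => mem_iUnion.mpr ⟨x, hUmem x⟩)
  have htne : t.Nonempty := by
    obtain ⟨x⟩ := hX
    obtain ⟨i, hi, -⟩ : ∃ i ∈ t, x ∈ U i := by simpa using ht (mem_univ x)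
    exact ⟨i, hi⟩
  refine ⟨t.inf' htne r, ?_, ?_⟩
  · exact (Finset.lt_inf'_iff htne).mpr fun i _ => hr i
  · intro x p
    obtain ⟨i, hi, hxU⟩ : ∃ i ∈ t, x ∈ U i := by simpa using ht (mem_univ x)
    have hle : (μ x (ball p (t.inf' htne r))).toReal ≤ (μ x (ball p (r i))).toReal :=
      ENNReal.toReal_mono (ne_top_of_le_ne_top (hfin x) (measure_mono (subset_univ _)))
        (measure_mono (ball_subset_ball (Finset.inf'_le r hi)))
    have hi2 : (μ i (ball p (r i))).toReal < δ / 2 :=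
      ENNReal.toReal_lt_of_lt_ofReal (hrball i p)
    have habs := abs_le.mp (hUest i x hxU (ball p (r i)) measurableSet_ball)
    linarith [habs.1, habs.2]
end

section
/- Let B ≥ 0 and c ≥ 0 be real numbers, let b : {1, 2, 3, …} → ℝ satisfy 0 ≤ b(p) ≤ B for all p, and let ρ : (0,1] → ℝ satisfy ρ(δ) → 1 as δ → 0⁺. Assume that b(q) ≥ ρ(p/q)·b(p) − c/p for all positive integers p ≤ q. Then the limit lim_{p→∞} b(p) exists; in particular lim inf_{p→∞} b(p) = lim sup_{p→∞} b(p). (This is the real-sequence argument underlying the lemma that the normalized widths of the unit cube converge: the hypothesis is the Lusternick–Schnirelman packing inequality applied with a maximal packing of the cube by subcubes of volume p/q, with ρ(δ) the packing density δ·N(δ).) -/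
open Filter

/-- If `b : ℕ → ℝ` is bounded (`0 ≤ b p ≤ B` for `p ≥ 1`), `ρ(δ) → 1` as
`δ → 0⁺`, and `b q ≥ ρ(p/q)·b p − c/p` for all positive integers `p ≤ q`, then
`lim_{p → ∞} b p` exists; in particular `liminf b = limsup b`. -/
theorem limit_exists_of_packing_inequality
    (B c : ℝ) (hB : 0 ≤ B) (hc : 0 ≤ c)
    (b : ℕ → ℝ) (hb : ∀ p : ℕ, 1 ≤ p → 0 ≤ b p ∧ b p ≤ B)
    (ρ : ℝ → ℝ)
    (hρ : ∀ ε : ℝ, 0 < ε → ∃ δ₀ : ℝ, 0 < δ₀ ∧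
      ∀ δ : ℝ, 0 < δ → δ < δ₀ → |ρ δ - 1| < ε)
    (hmain : ∀ p q : ℕ, 1 ≤ p → p ≤ q →
      ρ ((p : ℝ) / (q : ℝ)) * b p - c / (p : ℝ) ≤ b q) :
    (∃ L : ℝ, Tendsto b atTop (nhds L)) ∧
    liminf b atTop = limsup b atTop := by
  have hbdd_le : IsBoundedUnder (· ≤ ·) atTop b :=
    ⟨B, eventually_map.2 (eventually_atTop.2 ⟨1, fun p hp => (hb p hp).2⟩)⟩
  have hbdd_ge : IsBoundedUnder (· ≥ ·) atTop b :=
    ⟨0, eventually_map.2 (eventually_atTop.2 ⟨1, fun p hp => (hb p hp).1⟩)⟩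
  have hcob_le : IsCoboundedUnder (· ≤ ·) atTop b := hbdd_ge.isCoboundedUnder_le
  have hcob_ge : IsCoboundedUnder (· ≥ ·) atTop b := hbdd_le.isCoboundedUnder_ge
  have key : limsup b atTop ≤ liminf b atTop := by
    refine le_of_forall_pos_le_add fun ε hε => ?_
    set ε' := ε / (B + 2) with hε'def
    have hB2 : (0:ℝ) < B + 2 := by linarith
    have hε' : 0 < ε' := div_pos hε hB2
    obtain ⟨δ₀, hδ₀, hδ⟩ := hρ ε' hε'
    obtain ⟨N₀, hN₀⟩ := exists_nat_gt (c / ε')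
    have hfreq : ∃ᶠ p in atTop, limsup b atTop - ε' < b p :=
      frequently_lt_of_lt_limsup hcob_le (by linarith)
    obtain ⟨p, hpN, hpb⟩ := (frequently_atTop.1 hfreq) (max N₀ 1)
    have hp1 : 1 ≤ p := le_trans (le_max_right _ _) hpN
    have hpN₀ : N₀ ≤ p := le_trans (le_max_left _ _) hpN
    have hppos : (0:ℝ) < p := by exact_mod_cast hp1
    have hcp : c / p < ε' := by
      have hple : c / ε' < (p:ℝ) := lt_of_lt_of_le hN₀ (by exact_mod_cast hpN₀)
      have h1 : c < ε' * p := by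
        have := (div_lt_iff₀ hε').1 hple
        nlinarith
      exact (div_lt_iff₀ hppos).2 h1
    have hev : ∀ᶠ q in atTop, b p - ε' * B - ε' ≤ b q := by
      rw [eventually_atTop]
      refine ⟨max p (⌈(p:ℝ)/δ₀⌉₊ + 1), fun q hq => ?_⟩
      have hqp : p ≤ q := le_trans (le_max_left _ _) hq
      have hqc : (⌈(p:ℝ)/δ₀⌉₊ + 1 : ℕ) ≤ q := le_trans (le_max_right _ _) hq
      have hqpos : (0:ℝ) < q := lt_of_lt_of_le hppos (by exact_mod_cast hqp)
      have hdiv : (p:ℝ)/q < δ₀ := by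
        rw [div_lt_iff₀ hqpos]
        have h1 : (p:ℝ)/δ₀ < q := by
          calc (p:ℝ)/δ₀ ≤ ⌈(p:ℝ)/δ₀⌉₊ := Nat.le_ceil _
          _ < ((⌈(p:ℝ)/δ₀⌉₊ : ℕ) + 1 : ℝ) := by exact_mod_cast Nat.lt_succ_self _
          _ ≤ q := by exact_mod_cast hqc
        calc (p:ℝ) = (p:ℝ)/δ₀ * δ₀ := by field_simp
        _ < q * δ₀ := mul_lt_mul_of_pos_right h1 hδ₀
        _ = δ₀ * q := mul_comm _ _
      have hdivpos : 0 < (p:ℝ)/q := div_pos hppos hqpos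
      have hρd := abs_lt.1 (hδ _ hdivpos hdiv)
      have hbp := hb p hp1
      have h1 : b p - ε' * B ≤ ρ ((p:ℝ)/q) * b p := by
        nlinarith [hbp.1, hbp.2, hρd.1]
      have h2 := hmain p q hp1 hqp
      linarith [hcp]
    have hlinf : b p - ε' * B - ε' ≤ liminf b atTop :=
      le_liminf_of_le hcob_ge hev
    have heq : ε' * (B + 2) = ε := by
      rw [hε'def]; field_simp
    nlinarith
  have hlim : liminf b atTop = limsup b atTop :=
    le_antisymm (liminf_le_limsup hbdd_le hbdd_ge) key
  exact ⟨⟨limsup b atTop, tendsto_of_liminf_eq_limsup hlim rfl hbdd_le hbdd_ge⟩, hlim⟩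
end
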